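/- Let B be a finite-dimensional F_2-vector space and for each integer s let A_s be a finite-dimensional F_2-vector space with linear maps v_s, h_s : A_s → B. Assume there is g ≥ 1 with: v_s an isomorphism for s ≥ g, h_s an isomorphism for s ≤ −g, v_s = 0 for s ≤ −g−1, h_s = 0 for s ≥ g+1, and im h_s ⊆ im v_s ⊆ im v_{s+1} for s ≥ 0, im v_s ⊆ im h_s ⊆ im h_{s−1} for s ≤ 0. Fix coprime positive integers p, q. For x ∈ A_{⌊j/q⌋} with ⌊j/q⌋ ≥ 0, there exists a finitely-supported family α = (α_i)_{i ≥ j+p} with α_i ∈ A_{⌊i/q⌋} such that applying the map D (defined by D((a_i)_i) = (v_{⌊i/q⌋}(a_i) + h_{⌊(i−p)/q⌋}(a_{i−p}))_i) to the family x + α yields the family that is v_{⌊j/q⌋}(x) in position j and zero elsewhere. -/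
import Mathlib


/-- Abstract cancellation lemma: the rational-surgery mapping-cone differential `D` can be
corrected by a finitely-supported family `α` supported in indices `≥ j + p` so that the image
of `x + α` under `D` is `v_{⌊j/q⌋}(x)` in position `j` and zero elsewhere. -/
theorem stmt_6 (A : ℤ → Type*) [∀ s, AddCommGroup (A s)] [∀ s, Module (ZMod 2) (A s)]
    [∀ s, FiniteDimensional (ZMod 2) (A s)]
    (B : Type*) [AddCommGroup B] [Module (ZMod 2) B] [FiniteDimensional (ZMod 2) B]
    (v h : ∀ s : ℤ, A s →ₗ[ZMod 2] B)
    (g : ℤ) (hg : 1 ≤ g)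
    (hviso : ∀ s : ℤ, g ≤ s → Function.Bijective (v s))
    (hhiso : ∀ s : ℤ, s ≤ -g → Function.Bijective (h s))
    (hv0 : ∀ s : ℤ, s ≤ -g - 1 → v s = 0)
    (hh0 : ∀ s : ℤ, g + 1 ≤ s → h s = 0)
    (hpos : ∀ s : ℤ, 0 ≤ s → LinearMap.range (h s) ≤ LinearMap.range (v s)
      ∧ LinearMap.range (v s) ≤ LinearMap.range (v (s + 1)))
    (hneg : ∀ s : ℤ, s ≤ 0 → LinearMap.range (v s) ≤ LinearMap.range (h s)
      ∧ LinearMap.range (h s) ≤ LinearMap.range (h (s - 1)))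
    (p q : ℤ) (hp : 0 < p) (hq : 0 < q) (hpq : IsCoprime p q)
    (j : ℤ) (hj : 0 ≤ Int.fdiv j q) (x : A (Int.fdiv j q)) :
    ∃ a : ∀ i : ℤ, A (Int.fdiv i q),
      a j = x
      ∧ (∀ i : ℤ, i ≠ j → i < j + p → a i = 0)
      ∧ {i : ℤ | a i ≠ 0}.Finite
      ∧ ∀ i : ℤ, v (Int.fdiv i q) (a i) + h (Int.fdiv (i - p) q) (a (i - p))
          = if i = j then v (Int.fdiv j q) x else 0 := by
  classical
  -- monotonicity of floor division by q
  have fdiv_mono : ∀ a b : ℤ, a ≤ b → Int.fdiv a q ≤ Int.fdiv b q := by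
    intro a b hab
    rw [Int.fdiv_eq_ediv_of_nonneg _ hq.le, Int.fdiv_eq_ediv_of_nonneg _ hq.le]
    exact Int.ediv_le_ediv hq hab
  -- nonnegativity and monotonicity of the index sequence
  have hs0 : ∀ n : ℕ, 0 ≤ Int.fdiv (j + (n : ℤ) * p) q := by
    intro n
    refine hj.trans (fdiv_mono _ _ ?_)
    have := Int.natCast_nonneg n
    nlinarith
  have hsmono : ∀ n : ℕ, Int.fdiv (j + (n : ℤ) * p) q ≤ Int.fdiv (j + ((n + 1 : ℕ) : ℤ) * p) q := by
    intro n
    apply fdiv_mono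
    push_cast
    nlinarith
  -- chain of ranges
  have vchainN : ∀ s : ℤ, 0 ≤ s → ∀ k : ℕ,
      LinearMap.range (v s) ≤ LinearMap.range (v (s + k)) := by
    intro s hs k
    induction k with
    | zero => exact le_of_eq (congrArg (fun t => LinearMap.range (v t)) (by push_cast; ring))
    | succ k ih =>
      have h2 := (hpos (s + k) (by positivity)).2
      rw [show s + ((k + 1 : ℕ) : ℤ) = (s + k) + 1 by push_cast; ring]
      exact ih.trans h2
  have vchain : ∀ s : ℤ, 0 ≤ s → ∀ t : ℤ, s ≤ t →
      LinearMap.range (v s) ≤ LinearMap.range (v t) := by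
    intro s hs t ht
    have : t = s + ((t - s).toNat : ℤ) := by
      rw [Int.toNat_of_nonneg (by omega)]; ring
    rw [this]
    exact vchainN s hs _
  have key : ∀ s : ℤ, 0 ≤ s → ∀ t : ℤ, s ≤ t →
      LinearMap.range (h s) ≤ LinearMap.range (v t) := by
    intro s hs t ht
    exact (hpos s hs).1.trans (vchain s hs t ht)
  -- the step function
  have hpick : ∀ (n : ℕ) (y : A (Int.fdiv (j + (n : ℤ) * p) q)),
      ∃ z : A (Int.fdiv (j + ((n + 1 : ℕ) : ℤ) * p) q),
        v _ z = h _ y ∧ (h _ y = 0 → z = 0) := by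
    intro n y
    by_cases hz : h (Int.fdiv (j + (n : ℤ) * p) q) y = 0
    · exact ⟨0, by simp [hz], fun _ => rfl⟩
    · obtain ⟨z, hzv⟩ := key _ (hs0 n) _ (hsmono n) ⟨y, rfl⟩
      exact ⟨z, hzv, fun c => absurd c hz⟩
  choose pick hpick1 hpick2 using hpick
  have e0 : A (Int.fdiv j q) = A (Int.fdiv (j + ((0 : ℕ) : ℤ) * p) q) := by norm_num
  -- the recursively defined family along the arithmetic progression
  set f : ∀ n : ℕ, A (Int.fdiv (j + (n : ℤ) * p) q) :=
    fun n => Nat.rec (cast e0 x) pick n with hf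
  have f0 : f 0 = cast e0 x := rfl
  have fsucc : ∀ n : ℕ, f (n + 1) = pick n (f n) := fun n => rfl
  have fstep : ∀ n : ℕ, v (Int.fdiv (j + ((n + 1 : ℕ) : ℤ) * p) q) (f (n + 1))
      = h (Int.fdiv (j + (n : ℤ) * p) q) (f n) := fun n => hpick1 n (f n)
  -- eventual vanishing
  set M : ℕ := ((g + 1) * q - j).toNat with hM
  have hsbig : ∀ n : ℕ, M ≤ n → g + 1 ≤ Int.fdiv (j + (n : ℤ) * p) q := by
    intro n hn
    have h1 : (g + 1) * q ≤ j + (n : ℤ) * p := by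
      have h2 : ((M : ℤ)) ≤ (n : ℤ) := by exact_mod_cast hn
      have h3 : (g + 1) * q - j ≤ (M : ℤ) := Int.self_le_toNat _
      nlinarith [Int.natCast_nonneg n]
    calc g + 1 = Int.fdiv ((g + 1) * q) q := (Int.mul_fdiv_cancel _ hq.ne').symm
      _ ≤ _ := fdiv_mono _ _ h1
  have fvanish : ∀ n : ℕ, M ≤ n → f (n + 1) = 0 := by
    intro n hn
    apply hpick2
    rw [hh0 _ (hsbig n hn)]
    rfl
  have fbound : ∀ m : ℕ, f m ≠ 0 → m < M + 1 := by
    intro m hm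
    by_contra hc
    push_neg at hc
    obtain ⟨n, rfl⟩ : ∃ n, m = n + 1 := ⟨m - 1, by omega⟩
    exact hm (fvanish n (by omega))
  -- construct the family a
  obtain ⟨a, haEq, haZero⟩ : ∃ a : ∀ i : ℤ, A (Int.fdiv i q),
      (∀ (i : ℤ) (n : ℕ), i = j + (n : ℤ) * p → HEq (a i) (f n))
      ∧ (∀ i : ℤ, (¬∃ n : ℕ, i = j + (n : ℤ) * p) → a i = 0) := by
    refine ⟨fun i => if hy : ∃ n : ℕ, i = j + (n : ℤ) * p then
      cast (congrArg (fun t => A (Int.fdiv t q)) hy.choose_spec).symm (f hy.choose)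
      else 0, ?_, ?_⟩
    · intro i n hi
      subst hi
      have hy : ∃ m : ℕ, j + (n : ℤ) * p = j + (m : ℤ) * p := ⟨n, rfl⟩
      simp only [dif_pos hy]
      have hcn : hy.choose = n := by
        have := hy.choose_spec
        have h2 : ((hy.choose : ℤ)) * p = (n : ℤ) * p := by linarith
        have h3 : ((hy.choose : ℤ)) = (n : ℤ) := mul_right_cancel₀ hp.ne' h2
        exact_mod_cast h3
      refine HEq.trans (cast_heq _ _) ?_
      rw [hcn]
    · intro i hi
      exact dif_neg hi
  -- basic facts about a
  have haj : a j = x := by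
    have h1 : HEq (a j) (f 0) := haEq j 0 (by norm_num)
    have h2 : HEq (f 0) x := f0 ▸ cast_heq e0 x
    exact eq_of_heq (h1.trans h2)
  have haProg : ∀ n : ℕ, a (j + (n : ℤ) * p) = f n :=
    fun n => eq_of_heq (haEq _ n rfl)
  have char2 : ∀ (y : B), y + y = 0 := by
    intro y
    calc y + y = (2 : ZMod 2) • y := by rw [two_smul]
      _ = 0 := by rw [show (2 : ZMod 2) = 0 by decide, zero_smul]
  refine ⟨a, haj, ?_, ?_, ?_⟩
  · -- support lower bound
    intro i hij hilt
    apply haZero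
    rintro ⟨n, rfl⟩
    rcases Nat.eq_zero_or_pos n with hn | hn
    · subst hn; simp at hij
    · have : (1 : ℤ) ≤ (n : ℤ) := by exact_mod_cast hn
      nlinarith
  · -- finiteness of support
    refine Set.Finite.subset ((Set.finite_Iio (M + 1)).image fun n : ℕ => j + (n : ℤ) * p) ?_
    intro i hi
    by_cases hy : ∃ n : ℕ, i = j + (n : ℤ) * p
    · obtain ⟨n, rfl⟩ := hy
      exact ⟨n, fbound n (haProg n ▸ hi), rfl⟩
    · exact absurd (haZero i hy) hi
  · -- the differential equation
    intro i
    by_cases hy : ∃ n : ℕ, i = j + (n : ℤ) * p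
    · obtain ⟨n, rfl⟩ := hy
      cases n with
      | zero =>
        rw [show j + ((0 : ℕ) : ℤ) * p = j by norm_num]
        have hap : a (j - p) = 0 := by
          apply haZero
          rintro ⟨m, hm⟩
          have : (0 : ℤ) ≤ (m : ℤ) * p := by positivity
          omega
        rw [if_pos rfl, haj, hap, map_zero, add_zero]
      | succ n =>
        have hne : j + ((n + 1 : ℕ) : ℤ) * p ≠ j := by
          have : (1 : ℤ) ≤ ((n + 1 : ℕ) : ℤ) := by exact_mod_cast Nat.succ_le_succ (Nat.zero_le n)
          nlinarith
        rw [if_neg hne,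
          show j + ((n + 1 : ℕ) : ℤ) * p - p = j + (n : ℤ) * p by push_cast; ring,
          haProg, haProg n, fstep n]
        exact char2 _
    · have hi0 : a i = 0 := haZero i hy
      have hip : a (i - p) = 0 := by
        apply haZero
        rintro ⟨m, hm⟩
        exact hy ⟨m + 1, by push_cast at hm ⊢; linarith⟩
      have hij : i ≠ j := by
        rintro rfl
        exact hy ⟨0, by norm_num⟩
      rw [if_neg hij, hi0, hip, map_zero, map_zero, add_zero]
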